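/- arXiv:2011.01560 — 2 statements merged into one kernel-verified Lean document; each statement's English description precedes it below -/
import Mathlib

section
/- Let h : (-∞,0) → ℝ be convex with h(x) → ∞ as x → 0⁻. Then β(h'₊) = β(h) + 1, where β(g) = limsup_{x→0⁻} (log g(x))/log(1/|x|) and h'₊ is the right derivative of h. -/
open Filter Set

/-- The right derivative of a function `h : ℝ → ℝ` at `x`. -/
noncomputable def rightDeriv (h : ℝ → ℝ) (x : ℝ) : ℝ := derivWithin h (Set.Ici x) x

/-- `α(g) = liminf_{x→0⁻} log g(x) / log(1/|x|)`, as an extended real number. -/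
noncomputable def alphaInd (g : ℝ → ℝ) : EReal :=
  Filter.liminf (fun x : ℝ => ((Real.log (g x) / Real.log (1 / |x|) : ℝ) : EReal))
    (nhdsWithin 0 (Set.Iio 0))

/-- `β(g) = limsup_{x→0⁻} log g(x) / log(1/|x|)`, as an extended real number. -/
noncomputable def betaInd (g : ℝ → ℝ) : EReal :=
  Filter.limsup (fun x : ℝ => ((Real.log (g x) / Real.log (1 / |x|) : ℝ) : EReal))
    (nhdsWithin 0 (Set.Iio 0))

open Topology

/-! On the scale `log (1/|x|)`, a bound `g x ≤ C |x|^(-r)` near `0⁻` gives `β(g) ≤ r`,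
and `β(g) < c` gives `g x < |x|^(-c)` near `0⁻`. Convexity bounds `h'₊(x)` by the slope of `h`
over `[x, x/2]`, hence by `2 h(x/2) / |x|`, so `β(h'₊) ≤ β(h) + 1`. Conversely, if
`h'₊(x) < |x|^(-p)` near `0⁻`, comparing `h` with a primitive of `|x|^(-p)` gives
`h v - h u ≤ (|v|^(1-p) - |u|^(1-p)) / (p - 1)`: for `p < 1` this keeps `h` bounded, so
`β(h'₊) ≥ 1`, and for `p > 1` it gives `h v = O(|v|^(1-p))`, so `β(h) ≤ β(h'₊) - 1`. -/

theorem EReal.le_add_coe_of_forall_lt {a b : EReal} {t : ℝ}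
    (h : ∀ c : ℝ, a < c → b ≤ ↑(c + t)) : b ≤ a + t := by
  refine EReal.le_of_forall_lt_iff_le.1 fun z hz => ?_
  have hlt : a < ↑(z - t) := by
    rw [EReal.coe_sub, EReal.lt_sub_iff_add_lt (.inl (EReal.coe_ne_bot t))
      (.inl (EReal.coe_ne_top t))]
    exact hz
  simpa using h (z - t) hlt

theorem EReal.add_coe_le_of_forall_lt {a b : EReal} {t : ℝ}
    (h : ∀ d : ℝ, b < d → a ≤ ↑(d - t)) : a + t ≤ b :=
  EReal.le_of_forall_lt_iff_le.1 fun z hz => by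
    calc a + t ≤ ↑(z - t) + t := add_le_add_left (h z hz) _
      _ = z := by norm_cast; ring

theorem tendsto_log_one_div_abs_nhdsLT_zero :
    Tendsto (fun x : ℝ => Real.log (1 / |x|)) (𝓝[<] 0) atTop := by
  have hL : (fun x : ℝ => Real.log (1 / |x|)) = fun x => -Real.log x := by
    ext x
    simp [Real.log_inv]
  exact hL ▸ tendsto_neg_atBot_atTop.comp Real.tendsto_log_nhdsLT_zero

theorem log_rpow_neg_of_neg {x : ℝ} (hx : x < 0) (c : ℝ) :
    Real.log ((-x) ^ (-c)) = c * Real.log (1 / |x|) := by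
  rw [Real.log_rpow (neg_pos.2 hx), abs_of_neg hx, one_div, Real.log_inv]
  ring

theorem eventually_lt_rpow_of_betaInd_lt {g : ℝ → ℝ} {c : ℝ} (hc : betaInd g < c)
    (hg : ∀ᶠ x in 𝓝[<] 0, 0 < g x) : ∀ᶠ x in 𝓝[<] 0, g x < (-x) ^ (-c) := by
  filter_upwards [eventually_lt_of_limsup_lt hc,
    tendsto_log_one_div_abs_nhdsLT_zero.eventually_gt_atTop 0, hg, self_mem_nhdsWithin]
    with x hratio hL hgx hx
  rw [← Real.log_lt_log_iff hgx (Real.rpow_pos_of_pos (neg_pos.2 hx) _), log_rpow_neg_of_neg hx,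
    ← div_lt_iff₀ hL]
  exact_mod_cast hratio

theorem betaInd_le_of_eventually_le_rpow {g : ℝ → ℝ} {r C : ℝ}
    (hg : ∀ᶠ x in 𝓝[<] 0, 0 < g x ∧ g x ≤ C * (-x) ^ (-r)) : betaInd g ≤ r := by
  have hL := tendsto_log_one_div_abs_nhdsLT_zero
  have hlim : Tendsto (fun x : ℝ => ((r + Real.log C / Real.log (1 / |x|) : ℝ) : EReal))
      (𝓝[<] 0) (𝓝 r) := by
    have h := (tendsto_const_nhds (x := r)).add
      ((tendsto_const_nhds (x := Real.log C)).div_atTop hL)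
    rw [add_zero] at h
    exact (continuous_coe_real_ereal.tendsto r).comp h
  refine (limsup_le_limsup ?_).trans_eq hlim.limsup_eq
  filter_upwards [hg, hL.eventually_gt_atTop 0, self_mem_nhdsWithin] with x ⟨hgx, hle⟩ hLx hx
  have hrpow : 0 < (-x) ^ (-r) := Real.rpow_pos_of_pos (neg_pos.2 hx) _
  have hC : 0 < C := pos_of_mul_pos_left (hgx.trans_le hle) hrpow.le
  have hlog : Real.log (g x) ≤ Real.log C + r * Real.log (1 / |x|) := by
    rw [← log_rpow_neg_of_neg hx, ← Real.log_mul hC.ne' hrpow.ne']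
    exact Real.log_le_log hgx hle
  have hratio : Real.log (g x) / Real.log (1 / |x|) ≤ r + Real.log C / Real.log (1 / |x|) := by
    rw [div_le_iff₀ hLx, add_mul, div_mul_cancel₀ _ hLx.ne']
    linarith
  exact_mod_cast hratio

theorem tendsto_half_nhdsLT_zero : Tendsto (fun x : ℝ => x / 2) (𝓝[<] 0) (𝓝[<] 0) := by
  have hcont : Tendsto (fun x : ℝ => x / 2) (𝓝 0) (𝓝 0) := by
    simpa using (continuous_id.div_const (2 : ℝ)).tendsto 0
  exact tendsto_nhdsWithin_iff.2 ⟨hcont.mono_left nhdsWithin_le_nhds,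
    eventually_nhdsWithin_of_forall fun x (hx : x < 0) => show x / 2 < 0 by linarith⟩

theorem hasDerivAt_neg_rpow_one_sub_div {p x : ℝ} (hp : p ≠ 1) (hx : x < 0) :
    HasDerivAt (fun y : ℝ => (-y) ^ (1 - p) / (p - 1)) ((-x) ^ (-p)) x := by
  have h := ((Real.hasDerivAt_rpow_const (p := 1 - p) (Or.inl (neg_pos.2 hx).ne')).comp x
    (hasDerivAt_neg x)).div_const (p - 1)
  refine h.congr_deriv ?_
  rw [show 1 - p - 1 = -p by ring]
  field_simp [sub_ne_zero.2 hp]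
  ring

theorem half_rpow_div_half {t : ℝ} (ht : 0 < t) (c : ℝ) :
    (t / 2) ^ (-c) / (t / 2) = 2 ^ (c + 1) * t ^ (-(c + 1)) := by
  rw [← Real.rpow_sub_one (by positivity), Real.div_rpow ht.le zero_le_two,
    show -c - 1 = -(c + 1) by ring, Real.rpow_neg zero_le_two, div_inv_eq_mul, mul_comm]

section ConvexRightDeriv

variable {S : Set ℝ} {f : ℝ → ℝ} {x y : ℝ}

theorem rightDeriv_eq_derivWithin_Ioi (f : ℝ → ℝ) (x : ℝ) :
    rightDeriv f x = derivWithin f (Ioi x) x :=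
  (derivWithin_Ioi_eq_Ici f x).symm

theorem hasDerivWithinAt_rightDeriv (hfc : ConvexOn ℝ S f) (hx : x ∈ interior S) :
    HasDerivWithinAt f (rightDeriv f x) (Ici x) x := by
  rw [rightDeriv_eq_derivWithin_Ioi, ← hasDerivWithinAt_Ioi_iff_Ici]
  exact hfc.hasDerivWithinAt_rightDeriv_of_mem_interior hx

theorem rightDeriv_le_slope (hfc : ConvexOn ℝ S f) (hx : x ∈ interior S) (hy : y ∈ S)
    (hxy : x < y) : rightDeriv f x ≤ slope f x y :=
  rightDeriv_eq_derivWithin_Ioi f x ▸ hfc.rightDeriv_le_slope_of_mem_interior hx hy hxy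

theorem slope_le_rightDeriv (hfc : ConvexOn ℝ S f) (hx : x ∈ S) (hy : y ∈ interior S)
    (hxy : x < y) : slope f x y ≤ rightDeriv f y :=
  rightDeriv_eq_derivWithin_Ioi f y ▸ (hfc.slope_le_leftDeriv_of_mem_interior hx hy hxy).trans
    (hfc.leftDeriv_le_rightDeriv_of_mem_interior hy)

end ConvexRightDeriv

section BetaIndex

variable {h : ℝ → ℝ}

theorem tendsto_rightDeriv_atTop (hconv : ConvexOn ℝ (Iio 0) h)
    (hlim : Tendsto h (𝓝[<] 0) atTop) : Tendsto (rightDeriv h) (𝓝[<] 0) atTop := by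
  refine tendsto_atTop_mono' _ ?_ (tendsto_atTop_add_const_right _ (-h (-1)) hlim)
  filter_upwards [hlim.eventually_ge_atTop (h (-1)),
    Ioo_mem_nhdsLT (show (-1 : ℝ) < 0 by norm_num)] with y hy ⟨hy₁, hy₀⟩
  calc h y + -h (-1) ≤ (h y - h (-1)) / (y - -1) :=
        le_div_self (by linarith) (by linarith) (by linarith)
    _ = slope h (-1) y := (slope_def_field h _ _).symm
    _ ≤ rightDeriv h y :=
        slope_le_rightDeriv hconv (by norm_num) (by rw [interior_Iio]; exact hy₀) hy₁

theorem sub_le_of_rightDeriv_le_rpow (hconv : ConvexOn ℝ (Iio 0) h) {p u v : ℝ} (hp : p ≠ 1)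
    (huv : u ≤ v) (hv : v < 0) (hbound : ∀ x ∈ Ico u v, rightDeriv h x ≤ (-x) ^ (-p)) :
    h v - h u ≤ (-v) ^ (1 - p) / (p - 1) - (-u) ^ (1 - p) / (p - 1) := by
  set G : ℝ → ℝ := fun y => (-y) ^ (1 - p) / (p - 1)
  have hG : ∀ x ∈ Icc u v, HasDerivAt G ((-x) ^ (-p)) x := fun x hx =>
    hasDerivAt_neg_rpow_one_sub_div hp (hx.2.trans_lt hv)
  have hcomp := image_le_of_deriv_right_le_deriv_boundary (B := fun y => h u - G u + G y)
    ((hconv.continuousOn isOpen_Iio).mono fun y hy => hy.2.trans_lt hv)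
    (fun x hx => hasDerivWithinAt_rightDeriv hconv (by rw [interior_Iio]; exact hx.2.trans hv))
    (by simp) (fun x hx => ((hG x hx).const_add _).continuousAt.continuousWithinAt)
    (fun x hx => ((hG x (Ico_subset_Icc_self hx)).const_add _).hasDerivWithinAt) hbound
    (right_mem_Icc.2 huv)
  simp only [G] at hcomp
  linarith

theorem rightDeriv_le_div_of_nonneg (hconv : ConvexOn ℝ (Iio 0) h) {x : ℝ} (hx : x < 0)
    (hhx : 0 ≤ h x) : rightDeriv h x ≤ h (x / 2) / (-(x / 2)) :=
  calc rightDeriv h x ≤ slope h x (x / 2) :=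
        rightDeriv_le_slope hconv (by rwa [interior_Iio]) (by simp only [mem_Iio]; linarith)
          (by linarith)
    _ = (h (x / 2) - h x) / (-(x / 2)) := by rw [slope_def_field]; ring_nf
    _ ≤ h (x / 2) / (-(x / 2)) := by gcongr; linarith; linarith

theorem betaInd_rightDeriv_le (hconv : ConvexOn ℝ (Iio 0) h) (hlim : Tendsto h (𝓝[<] 0) atTop)
    {c : ℝ} (hc : betaInd h < c) : betaInd (rightDeriv h) ≤ ↑(c + 1) := by
  have hpos : ∀ᶠ x in 𝓝[<] 0, 0 < h x := hlim.eventually_gt_atTop 0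
  apply betaInd_le_of_eventually_le_rpow (C := 2 ^ (c + 1))
  filter_upwards [tendsto_half_nhdsLT_zero.eventually (eventually_lt_rpow_of_betaInd_lt hc hpos),
    hpos, (tendsto_rightDeriv_atTop hconv hlim).eventually_gt_atTop 0, self_mem_nhdsWithin]
    with x hhalf hhx hderiv (hx : x < 0)
  refine ⟨hderiv, ?_⟩
  calc rightDeriv h x ≤ h (x / 2) / (-(x / 2)) := rightDeriv_le_div_of_nonneg hconv hx hhx.le
    _ ≤ (-(x / 2)) ^ (-c) / (-(x / 2)) := by gcongr; linarith
    _ = 2 ^ (c + 1) * (-x) ^ (-(c + 1)) := by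
        rw [neg_div', half_rpow_div_half (neg_pos.2 hx)]

theorem exists_sub_le_rpow_of_betaInd_rightDeriv_lt (hconv : ConvexOn ℝ (Iio 0) h)
    (hlim : Tendsto h (𝓝[<] 0) atTop) {p : ℝ} (hp : p ≠ 1)
    (hβ : betaInd (rightDeriv h) < p) :
    ∃ u < 0, ∀ v ∈ Ioo u 0,
      h v - h u ≤ (-v) ^ (1 - p) / (p - 1) - (-u) ^ (1 - p) / (p - 1) := by
  have hpos := (tendsto_rightDeriv_atTop hconv hlim).eventually_gt_atTop 0
  obtain ⟨a, ha, hsub⟩ :=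
    mem_nhdsLT_iff_exists_Ioo_subset.1 (eventually_lt_rpow_of_betaInd_lt hβ hpos)
  refine ⟨a / 2, by linarith [mem_Iio.1 ha], fun v hv => ?_⟩
  refine sub_le_of_rightDeriv_le_rpow hconv hp hv.1.le hv.2 fun x hx => (hsub ⟨?_, ?_⟩).le
  · linarith [mem_Iio.1 ha, hx.1]
  · exact hx.2.trans hv.2

theorem one_le_betaInd_rightDeriv (hconv : ConvexOn ℝ (Iio 0) h)
    (hlim : Tendsto h (𝓝[<] 0) atTop) : 1 ≤ betaInd (rightDeriv h) := by
  by_contra! hlt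
  obtain ⟨c, hβc, hc⟩ := EReal.exists_between_coe_real hlt
  have hc1 : c < 1 := by exact_mod_cast hc
  obtain ⟨u, hu, hle⟩ := exists_sub_le_rpow_of_betaInd_rightDeriv_lt hconv hlim hc1.ne hβc
  obtain ⟨v, hv, hbig⟩ := (Filter.Eventually.and (Ioo_mem_nhdsLT hu)
    (hlim.eventually_gt_atTop (h u - (-u) ^ (1 - c) / (c - 1)))).exists
  have hneg : (-v) ^ (1 - c) / (c - 1) ≤ 0 :=
    div_nonpos_of_nonneg_of_nonpos (Real.rpow_nonneg (by linarith [hv.2]) _) (by linarith)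
  linarith [hle v hv]

theorem betaInd_le_of_betaInd_rightDeriv_lt (hconv : ConvexOn ℝ (Iio 0) h)
    (hlim : Tendsto h (𝓝[<] 0) atTop) {d : ℝ} (hd : 1 < d) (hβ : betaInd (rightDeriv h) < d) :
    betaInd h ≤ ↑(d - 1) := by
  obtain ⟨u, hu, hle⟩ := exists_sub_le_rpow_of_betaInd_rightDeriv_lt hconv hlim hd.ne' hβ
  apply betaInd_le_of_eventually_le_rpow (C := |h u| + (d - 1)⁻¹)
  filter_upwards [Ioo_mem_nhdsLT hu, Ioo_mem_nhdsLT (show (-1 : ℝ) < 0 by norm_num),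
    hlim.eventually_gt_atTop 0] with v hv ⟨hv₁, hv₀⟩ hpos
  refine ⟨hpos, ?_⟩
  have hone : 1 ≤ (-v) ^ (-(d - 1)) :=
    Real.one_le_rpow_of_pos_of_le_one_of_nonpos (by linarith) (by linarith) (by linarith)
  have hu_term : 0 ≤ (-u) ^ (1 - d) / (d - 1) :=
    div_nonneg (Real.rpow_nonneg (by linarith) _) (by linarith)
  have hv_term : (-v) ^ (1 - d) / (d - 1) = (d - 1)⁻¹ * (-v) ^ (-(d - 1)) := by
    rw [show 1 - d = -(d - 1) by ring, div_eq_inv_mul]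
  nlinarith [hle v hv, le_abs_self (h u), abs_nonneg (h u), inv_pos.2 (sub_pos.2 hd)]

end BetaIndex

/-- If `h` is convex on `(-∞,0)` with `h(x) → ∞` as `x → 0⁻`, then
`β(h'₊) = β(h) + 1`. -/
theorem beta_rightDeriv_eq (h : ℝ → ℝ)
    (hconv : ConvexOn ℝ (Set.Iio (0:ℝ)) h)
    (hlim : Tendsto h (nhdsWithin 0 (Set.Iio 0)) atTop) :
    betaInd (rightDeriv h) = betaInd h + 1 := by
  rw [← EReal.coe_one]
  refine le_antisymm
    (EReal.le_add_coe_of_forall_lt fun c hc => betaInd_rightDeriv_le hconv hlim hc)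
    (EReal.add_coe_le_of_forall_lt fun d hd =>
      betaInd_le_of_betaInd_rightDeriv_lt hconv hlim ?_ hd)
  exact_mod_cast (one_le_betaInd_rightDeriv hconv hlim).trans_lt hd
end

section
/- Let f be analytic in the unit disc 𝔻 and k ∈ ℕ. Then λ_M(f^{(k)}) = λ_M(f) and σ_M(f^{(k)}) = σ_M(f), where λ_M(g) = liminf_{r→1⁻} log⁺log⁺M(r,g)/log(1/(1-r)) and σ_M(g) = limsup_{r→1⁻} log⁺log⁺M(r,g)/log(1/(1-r)). -/
open Filter Set

/-- Maximum modulus `M(r,f) = max_{|z|=r} |f(z)|`. -/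
noncomputable def maxMod (f : ℂ → ℂ) (r : ℝ) : ℝ :=
  sSup ((fun z => ‖f z‖) '' Metric.sphere (0:ℂ) r)

/-- `log⁺ x = max (log x) 0`. -/
noncomputable def logPlus (x : ℝ) : ℝ := max (Real.log x) 0

/-- Lower order of growth `λ_M(f)`. -/
noncomputable def lowerOrder (f : ℂ → ℂ) : EReal :=
  Filter.liminf
    (fun r : ℝ => ((logPlus (logPlus (maxMod f r)) / Real.log (1 / (1 - r)) : ℝ) : EReal))
    (nhdsWithin 1 (Set.Iio 1))

/-- Order of growth `σ_M(f)`. -/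
noncomputable def upperOrder (f : ℂ → ℂ) : EReal :=
  Filter.limsup
    (fun r : ℝ => ((logPlus (logPlus (maxMod f r)) / Real.log (1 / (1 - r)) : ℝ) : EReal))
    (nhdsWithin 1 (Set.Iio 1))

/-- `K(r,f) = r · (log M(r,f))'₊`, using the right derivative. -/
noncomputable def Kfun (f : ℂ → ℂ) (r : ℝ) : ℝ :=
  r * derivWithin (fun t => Real.log (maxMod f t)) (Set.Ici r) r

/-- `λ_*(f) = liminf_{r→1⁻} log⁺ K(r,f) / log(1/(1-r))`. -/
noncomputable def lowerStar (f : ℂ → ℂ) : EReal :=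
  Filter.liminf
    (fun r : ℝ => ((logPlus (Kfun f r) / Real.log (1 / (1 - r)) : ℝ) : EReal))
    (nhdsWithin 1 (Set.Iio 1))

/-! Cauchy's estimate on the circles of radius `(1 - r) / 2` centred on `|z| = r` gives
`M(r, f⁽ᵏ⁾) ≤ k! (2 / (1 - r))ᵏ M((1 + r) / 2, f)`, and the mean value inequality applied `k` times
gives `M(r, f) ≤ M(r, f⁽ᵏ⁾) + ∑_{l<k} |f⁽ˡ⁾(0)|`. After taking `log⁺ log⁺` both error terms are
`O(log log (1 / (1 - r)))`, negligible against `log (1 / (1 - r))`, and the substitution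
`r ↦ (1 + r) / 2` only adds `log 2` to `log (1 / (1 - r))`, so it changes neither the liminf nor
the limsup. -/

open Metric Real Topology

section MaxMod

variable {g : ℂ → ℂ} {r : ℝ}

lemma maxMod_nonneg (g : ℂ → ℂ) (r : ℝ) : 0 ≤ maxMod g r :=
  Real.sSup_nonneg (by rintro _ ⟨z, -, rfl⟩; exact norm_nonneg _)

lemma norm_le_maxMod (hg : ContinuousOn g (sphere 0 r)) {z : ℂ} (hz : z ∈ sphere 0 r) :
    ‖g z‖ ≤ maxMod g r :=
  le_csSup ((isCompact_sphere 0 r).bddAbove_image hg.norm) ⟨z, hz, rfl⟩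

lemma maxMod_le (hr : 0 ≤ r) {C : ℝ} (h : ∀ z ∈ sphere (0 : ℂ) r, ‖g z‖ ≤ C) :
    maxMod g r ≤ C :=
  csSup_le ((NormedSpace.sphere_nonempty.mpr hr).image _) (by rintro _ ⟨z, hz, rfl⟩; exact h z hz)

lemma norm_le_maxMod_of_norm_le (hg : DifferentiableOn ℂ g (closedBall 0 r)) (hr : 0 < r)
    {z : ℂ} (hz : ‖z‖ ≤ r) : ‖g z‖ ≤ maxMod g r := by
  have hcl : closure (ball (0 : ℂ) r) = closedBall 0 r := closure_ball 0 hr.ne'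
  refine Complex.norm_le_of_forall_mem_frontier_norm_le isBounded_ball
    (DifferentiableOn.diffContOnCl (hcl ▸ hg)) (fun w hw => ?_) (by simpa [hcl])
  rw [frontier_ball 0 hr.ne'] at hw
  exact norm_le_maxMod (hg.continuousOn.mono sphere_subset_closedBall) hw

lemma maxMod_iteratedDeriv_le {s : ℝ} (hg : DifferentiableOn ℂ g (closedBall 0 s)) (hr : 0 ≤ r)
    (hrs : r < s) (k : ℕ) :
    maxMod (iteratedDeriv k g) r ≤ k.factorial / (s - r) ^ k * maxMod g s := by
  refine maxMod_le hr fun z hz => ?_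
  have hzr : ‖z‖ = r := mem_sphere_zero_iff_norm.mp hz
  have hsub : closedBall z (s - r) ⊆ closedBall 0 s := fun w hw => by
    rw [mem_closedBall_zero_iff]
    calc ‖w‖ ≤ ‖w - z‖ + ‖z‖ := norm_le_norm_sub_add w z
      _ ≤ s := by rw [← dist_eq_norm, hzr]; linarith [mem_closedBall.mp hw]
  have hcl : closure (ball z (s - r)) = closedBall z (s - r) := closure_ball z (by linarith)
  have := Complex.norm_iteratedDeriv_le_of_forall_mem_sphere_norm_le k (sub_pos.mpr hrs)
    (DifferentiableOn.diffContOnCl (hcl ▸ hg.mono hsub)) fun w hw =>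
      norm_le_maxMod_of_norm_le hg (hr.trans_lt hrs)
        (mem_closedBall_zero_iff.mp (hsub (sphere_subset_closedBall hw)))
  rwa [mul_div_right_comm] at this

lemma maxMod_le_mul_maxMod_deriv_add (hg : AnalyticOnNhd ℂ g (closedBall 0 r)) (hr : 0 < r) :
    maxMod g r ≤ r * maxMod (deriv g) r + ‖g 0‖ := by
  refine maxMod_le hr.le fun z hz => ?_
  have hzr : ‖z‖ = r := mem_sphere_zero_iff_norm.mp hz
  have hmvt := (convex_closedBall (0 : ℂ) r).norm_image_sub_le_of_norm_deriv_le
    (fun x hx => (hg x hx).differentiableAt)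
    (fun x hx => norm_le_maxMod_of_norm_le hg.deriv.differentiableOn hr
      (mem_closedBall_zero_iff.mp hx))
    (mem_closedBall_self hr.le) (sphere_subset_closedBall hz)
  rw [sub_zero, hzr] at hmvt
  calc ‖g z‖ ≤ ‖g z - g 0‖ + ‖g 0‖ := norm_le_norm_sub_add _ _
    _ ≤ r * maxMod (deriv g) r + ‖g 0‖ := by rw [mul_comm]; gcongr

lemma maxMod_le_pow_mul_maxMod_iteratedDeriv_add_sum (hg : AnalyticOnNhd ℂ g (closedBall 0 r))
    (hr : 0 < r) (k : ℕ) :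
    maxMod g r ≤ r ^ k * maxMod (iteratedDeriv k g) r +
      ∑ l ∈ Finset.range k, r ^ l * ‖iteratedDeriv l g 0‖ := by
  induction k generalizing g with
  | zero => simp
  | succ k ih =>
    simp only [iteratedDeriv_succ', Finset.sum_range_succ', pow_succ', pow_zero, one_mul,
      iteratedDeriv_zero]
    calc maxMod g r ≤ r * maxMod (deriv g) r + ‖g 0‖ := maxMod_le_mul_maxMod_deriv_add hg hr
      _ ≤ r * (r ^ k * maxMod (iteratedDeriv k (deriv g)) r +
            ∑ l ∈ Finset.range k, r ^ l * ‖iteratedDeriv l (deriv g) 0‖) + ‖g 0‖ := by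
        gcongr; exact ih hg.deriv
      _ = _ := by simp only [mul_add, Finset.mul_sum, mul_assoc]; ring

end MaxMod

noncomputable def logLogMaxMod (g : ℂ → ℂ) (r : ℝ) : ℝ := log⁺ (log⁺ (maxMod g r))

section Growth

variable {f : ℂ → ℂ}

lemma one_le_one_div_one_sub {r : ℝ} (hr : r ∈ Ico (0 : ℝ) 1) : 1 ≤ 1 / (1 - r) := by
  rw [le_div_iff₀ (by linarith [hr.2])]; linarith [hr.1]

lemma exists_logLogMaxMod_iteratedDeriv_le (hf : DifferentiableOn ℂ f (ball 0 1)) (k : ℕ) :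
    ∃ c, ∀ r ∈ Ioo (0 : ℝ) 1, logLogMaxMod (iteratedDeriv k f) r ≤
      logLogMaxMod f ((1 + r) / 2) + c + log⁺ (log (1 / (1 - r))) := by
  set B := log⁺ k.factorial + k * log⁺ 2
  refine ⟨2 * log 2 + log⁺ B + log⁺ k, fun r hr => ?_⟩
  obtain ⟨hr0, hr1⟩ := hr
  set s := (1 + r) / 2 with hs_def
  set ℓ := log (1 / (1 - r))
  have hs : s - r = (1 / (1 - r) * 2)⁻¹ := by rw [hs_def]; field_simp; ring
  have hℓ : log⁺ (1 / (1 - r)) = ℓ :=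
    posLog_eq_log ((one_le_one_div_one_sub ⟨hr0.le, hr1⟩).trans (le_abs_self _))
  have hcauchy := maxMod_iteratedDeriv_le
    (hf.mono (closedBall_subset_ball (by rw [hs_def]; linarith))) hr0.le
    (show r < s by rw [hs_def]; linarith) k
  rw [hs, div_eq_mul_inv, inv_pow, inv_inv] at hcauchy
  have hlog : log⁺ (maxMod (iteratedDeriv k f) r) ≤ B + k * ℓ + log⁺ (maxMod f s) :=
    calc log⁺ (maxMod (iteratedDeriv k f) r)
        ≤ log⁺ (k.factorial * (1 / (1 - r) * 2) ^ k * maxMod f s) :=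
          posLog_le_posLog (maxMod_nonneg _ _) hcauchy
      _ ≤ log⁺ k.factorial + k * (log⁺ (1 / (1 - r)) + log⁺ 2) + log⁺ (maxMod f s) := by
          grw [posLog_mul, posLog_mul, posLog_pow, posLog_mul]
      _ = B + k * ℓ + log⁺ (maxMod f s) := by rw [hℓ]; ring
  calc logLogMaxMod (iteratedDeriv k f) r ≤ log⁺ (B + k * ℓ + log⁺ (maxMod f s)) :=
        posLog_le_posLog posLog_nonneg hlog
    _ ≤ log 2 + (log 2 + log⁺ B + (log⁺ k + log⁺ ℓ)) + logLogMaxMod f s := by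
        grw [posLog_add, posLog_add, posLog_mul]; rfl
    _ = logLogMaxMod f s + (2 * log 2 + log⁺ B + log⁺ k) + log⁺ ℓ := by ring

lemma exists_logLogMaxMod_le_iteratedDeriv (hf : DifferentiableOn ℂ f (ball 0 1)) (k : ℕ) :
    ∃ c, ∀ r ∈ Ioo (0 : ℝ) 1, logLogMaxMod f r ≤ logLogMaxMod (iteratedDeriv k f) r + c := by
  set C := ∑ l ∈ Finset.range k, ‖iteratedDeriv l f 0‖
  refine ⟨log 2 + log⁺ (log 2 + log⁺ C), fun r hr => ?_⟩
  have hbound : maxMod f r ≤ maxMod (iteratedDeriv k f) r + C := by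
    refine (maxMod_le_pow_mul_maxMod_iteratedDeriv_add_sum
      ((hf.analyticOnNhd isOpen_ball).mono (closedBall_subset_ball hr.2)) hr.1 k).trans ?_
    have hpow : ∀ l, r ^ l ≤ 1 := fun l => pow_le_one₀ hr.1.le hr.2.le
    exact add_le_add (mul_le_of_le_one_left (maxMod_nonneg _ _) (hpow k))
      (Finset.sum_le_sum fun l _ => mul_le_of_le_one_left (norm_nonneg _) (hpow l))
  calc logLogMaxMod f r ≤ log⁺ (log 2 + log⁺ (maxMod (iteratedDeriv k f) r) + log⁺ C) :=
        posLog_le_posLog posLog_nonneg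
          ((posLog_le_posLog (maxMod_nonneg _ _) hbound).trans posLog_add)
    _ ≤ log 2 + logLogMaxMod (iteratedDeriv k f) r + log⁺ (log 2 + log⁺ C) := by
        rw [add_comm (log 2), add_assoc]; exact posLog_add
    _ = _ := by ring

end Growth

section LiminfLimsup

variable {α : Type*} {l : Filter α} [l.NeBot] {u v a b : α → ℝ}

lemma liminf_coe_le_of_le_mul_add (ha : Tendsto a l (𝓝 1)) (hb : Tendsto b l (𝓝 0))
    (hv : ∀ᶠ x in l, 0 ≤ v x) (h : ∀ᶠ x in l, u x ≤ a x * v x + b x) :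
    liminf (fun x => (u x : EReal)) l ≤ liminf (fun x => (v x : EReal)) l := by
  have ha' : Tendsto (fun x => (a x : EReal)) l (𝓝 1) := EReal.tendsto_coe.mpr ha
  have hb' : Tendsto (fun x => (b x : EReal)) l (𝓝 0) := EReal.tendsto_coe.mpr hb
  calc liminf (fun x => (u x : EReal)) l
      ≤ liminf ((fun x => (b x : EReal)) + (fun x => (a x : EReal)) * fun x => (v x : EReal)) l :=
        liminf_le_liminf (h.mono fun x hx => by
          simp only [Pi.add_apply, Pi.mul_apply]; exact_mod_cast hx.trans_eq (add_comm _ _))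
    _ ≤ limsup (fun x => (b x : EReal)) l +
          liminf ((fun x => (a x : EReal)) * fun x => (v x : EReal)) l :=
        EReal.liminf_add_le (by simp [hb'.limsup_eq]) (by simp [hb'.limsup_eq])
    _ ≤ limsup (fun x => (a x : EReal)) l * liminf (fun x => (v x : EReal)) l := by
        rw [hb'.limsup_eq, zero_add]
        refine EReal.liminf_mul_le ((ha.eventually_const_lt one_pos).mono fun x hx => ?_)
          (hv.mono fun x hx => ?_) (by simp [ha'.limsup_eq])
          (.inl (by rw [ha'.limsup_eq]; exact EReal.coe_ne_top 1))
        · exact EReal.coe_nonneg.mpr hx.le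
        · exact EReal.coe_nonneg.mpr hx
    _ = liminf (fun x => (v x : EReal)) l := by rw [ha'.limsup_eq, one_mul]

lemma limsup_coe_le_of_le_mul_add (ha : Tendsto a l (𝓝 1)) (hb : Tendsto b l (𝓝 0))
    (hv : ∀ᶠ x in l, 0 ≤ v x) (h : ∀ᶠ x in l, u x ≤ a x * v x + b x) :
    limsup (fun x => (u x : EReal)) l ≤ limsup (fun x => (v x : EReal)) l := by
  have ha' : Tendsto (fun x => (a x : EReal)) l (𝓝 1) := EReal.tendsto_coe.mpr ha
  have hb' : Tendsto (fun x => (b x : EReal)) l (𝓝 0) := EReal.tendsto_coe.mpr hb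
  calc limsup (fun x => (u x : EReal)) l
      ≤ limsup ((fun x => (a x : EReal)) * (fun x => (v x : EReal)) + fun x => (b x : EReal)) l :=
        limsup_le_limsup (h.mono fun x hx => by
          simp only [Pi.add_apply, Pi.mul_apply]; exact_mod_cast hx)
    _ ≤ limsup ((fun x => (a x : EReal)) * fun x => (v x : EReal)) l +
          limsup (fun x => (b x : EReal)) l :=
        EReal.limsup_add_le (by simp [hb'.limsup_eq]) (by simp [hb'.limsup_eq])
    _ ≤ limsup (fun x => (a x : EReal)) l * limsup (fun x => (v x : EReal)) l := by
        rw [hb'.limsup_eq, add_zero]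
        refine EReal.limsup_mul_le
          ((ha.eventually_const_lt one_pos).frequently.mono fun x hx => ?_)
          (hv.mono fun x hx => ?_) (by simp [ha'.limsup_eq])
          (.inl (by rw [ha'.limsup_eq]; exact EReal.coe_ne_top 1))
        · exact EReal.coe_nonneg.mpr hx.le
        · exact EReal.coe_nonneg.mpr hx
    _ = limsup (fun x => (v x : EReal)) l := by rw [ha'.limsup_eq, one_mul]

end LiminfLimsup

section NearOne

lemma tendsto_affine_nhdsLT_one {a b : ℝ} (ha : 0 < a) (hab : a + b = 1) :
    Tendsto (fun r => a * r + b) (𝓝[<] 1) (𝓝[<] 1) := by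
  refine tendsto_nhdsWithin_iff.mpr ⟨?_, eventually_nhdsWithin_of_forall fun r hr => ?_⟩
  · exact (((continuous_const_mul a).add continuous_const).tendsto' 1 1 (by simp [hab])).mono_left
      nhdsWithin_le_nhds
  · simp only [mem_Iio] at hr ⊢; nlinarith

lemma map_midpoint_one_nhdsLT : map (fun r : ℝ => (1 + r) / 2) (𝓝[<] 1) = 𝓝[<] 1 :=
  map_eq_of_inverse (fun σ => 2 * σ - 1) (funext fun σ => by simp only [Function.comp, id]; ring)
    ((tendsto_affine_nhdsLT_one (b := 1 / 2) one_half_pos (by norm_num)).congr fun r => by ring)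
    ((tendsto_affine_nhdsLT_one (b := -1) two_pos (by norm_num)).congr fun r => by ring)

lemma tendsto_log_one_div_one_sub : Tendsto (fun r : ℝ => log (1 / (1 - r))) (𝓝[<] 1) atTop := by
  have h : Tendsto (fun r : ℝ => 1 - r) (𝓝[<] 1) (𝓝[>] 0) :=
    tendsto_nhdsWithin_iff.mpr ⟨((continuous_const.sub continuous_id).tendsto' 1 0
      (sub_self 1)).mono_left nhdsWithin_le_nhds,
      eventually_nhdsWithin_of_forall fun r hr => mem_Ioi.mpr (sub_pos.mpr hr)⟩
  simpa only [one_div, Function.comp_def] using tendsto_log_atTop.comp (tendsto_inv_nhdsGT_zero.comp h)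

lemma tendsto_log_midpoint_div_log :
    Tendsto (fun r : ℝ => log (1 / (1 - (1 + r) / 2)) / log (1 / (1 - r))) (𝓝[<] 1) (𝓝 1) := by
  have h : Tendsto (fun r : ℝ => 1 + log 2 / log (1 / (1 - r))) (𝓝[<] 1) (𝓝 1) := by
    simpa using tendsto_const_nhds.add
      ((tendsto_const_nhds (x := log 2)).div_atTop tendsto_log_one_div_one_sub)
  refine h.congr' ?_
  filter_upwards [tendsto_log_one_div_one_sub.eventually_gt_atTop 0,
    self_mem_nhdsWithin] with r hℓ hr
  have h1r : 1 - r ≠ 0 := sub_ne_zero.mpr (ne_of_lt hr).symm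
  rw [show 1 / (1 - (1 + r) / 2) = 2 * (1 / (1 - r)) by
      rw [show 1 - (1 + r) / 2 = (1 - r) / 2 by ring, one_div_div, mul_one_div],
    log_mul two_ne_zero (one_div_ne_zero h1r), add_div, div_self hℓ.ne', add_comm]

lemma tendsto_const_add_posLog_div_atTop (c : ℝ) :
    Tendsto (fun t => (c + log⁺ t) / t) atTop (𝓝 0) := by
  have hlog : Tendsto (fun t => log⁺ t / t) atTop (𝓝 0) :=
    isLittleO_log_id_atTop.tendsto_div_nhds_zero.congr' <|
      (eventually_ge_atTop 1).mono fun t ht => by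
        dsimp only [id]; rw [posLog_eq_log (ht.trans (le_abs_self t))]
  simpa only [add_div, zero_add, id] using (tendsto_const_nhds.div_atTop tendsto_id).add hlog

lemma liminf_and_limsup_div_log_le_of_le_comp {u v m : ℝ → ℝ} (hv : ∀ r, 0 ≤ v r)
    (hm : map m (𝓝[<] 1) = 𝓝[<] 1)
    (hℓm : Tendsto (fun r => log (1 / (1 - m r)) / log (1 / (1 - r))) (𝓝[<] 1) (𝓝 1)) {c : ℝ}
    (h : ∀ᶠ r in 𝓝[<] 1, u r ≤ v (m r) + c + log⁺ (log (1 / (1 - r)))) :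
    liminf (fun r => ((u r / log (1 / (1 - r)) : ℝ) : EReal)) (𝓝[<] 1) ≤
        liminf (fun r => ((v r / log (1 / (1 - r)) : ℝ) : EReal)) (𝓝[<] 1) ∧
      limsup (fun r => ((u r / log (1 / (1 - r)) : ℝ) : EReal)) (𝓝[<] 1) ≤
        limsup (fun r => ((v r / log (1 / (1 - r)) : ℝ) : EReal)) (𝓝[<] 1) := by
  set ℓ : ℝ → ℝ := fun r => log (1 / (1 - r))
  have hℓpos : ∀ᶠ r in 𝓝[<] 1, 0 < ℓ r := tendsto_log_one_div_one_sub.eventually_gt_atTop 0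
  have hb := (tendsto_const_add_posLog_div_atTop c).comp tendsto_log_one_div_one_sub
  have hmt : Tendsto m (𝓝[<] 1) (𝓝[<] 1) := hm.le
  have hv' : ∀ᶠ r in 𝓝[<] 1, 0 ≤ v (m r) / ℓ (m r) :=
    (hmt.eventually hℓpos).mono fun r hr => div_nonneg (hv _) hr.le
  have hbound : ∀ᶠ r in 𝓝[<] 1,
      u r / ℓ r ≤ ℓ (m r) / ℓ r * (v (m r) / ℓ (m r)) + (c + log⁺ (ℓ r)) / ℓ r := by
    filter_upwards [h, hℓpos, hmt.eventually hℓpos] with r hr hℓr hℓmr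
    rw [div_mul_div_comm, mul_comm, mul_div_mul_right _ _ hℓmr.ne', ← add_div]
    gcongr
    linarith
  constructor
  · calc _ ≤ liminf ((fun r => ((v r / ℓ r : ℝ) : EReal)) ∘ m) (𝓝[<] 1) :=
          liminf_coe_le_of_le_mul_add hℓm hb hv' hbound
      _ = _ := by rw [liminf_comp, hm]
  · calc _ ≤ limsup ((fun r => ((v r / ℓ r : ℝ) : EReal)) ∘ m) (𝓝[<] 1) :=
          limsup_coe_le_of_le_mul_add hℓm hb hv' hbound
      _ = _ := by rw [limsup_comp, hm]

end NearOne

lemma lowerOrder_eq_liminf (g : ℂ → ℂ) : lowerOrder g =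
    liminf (fun r => ((logLogMaxMod g r / log (1 / (1 - r)) : ℝ) : EReal)) (𝓝[<] 1) := by
  simp only [lowerOrder, logLogMaxMod, logPlus, posLog, max_comm]

lemma upperOrder_eq_limsup (g : ℂ → ℂ) : upperOrder g =
    limsup (fun r => ((logLogMaxMod g r / log (1 / (1 - r)) : ℝ) : EReal)) (𝓝[<] 1) := by
  simp only [upperOrder, logLogMaxMod, logPlus, posLog, max_comm]

/-- For `f` analytic in the unit disc and `k ∈ ℕ`, the derivative `f⁽ᵏ⁾` has the
same lower order and the same order of growth as `f`. -/
theorem order_iteratedDeriv (f : ℂ → ℂ) (k : ℕ)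
    (hf : DifferentiableOn ℂ f (Metric.ball (0:ℂ) 1)) :
    lowerOrder (iteratedDeriv k f) = lowerOrder f ∧
    upperOrder (iteratedDeriv k f) = upperOrder f := by
  have hIoo : Ioo (0 : ℝ) 1 ∈ 𝓝[<] 1 := Ioo_mem_nhdsLT one_pos
  obtain ⟨c₁, hcauchy⟩ := exists_logLogMaxMod_iteratedDeriv_le hf k
  obtain ⟨c₂, hreverse⟩ := exists_logLogMaxMod_le_iteratedDeriv hf k
  have hle₁ := liminf_and_limsup_div_log_le_of_le_comp (u := logLogMaxMod (iteratedDeriv k f))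
    (v := logLogMaxMod f) (fun _ => posLog_nonneg) map_midpoint_one_nhdsLT
    tendsto_log_midpoint_div_log (mem_of_superset hIoo fun r hr => hcauchy r hr)
  have hle₂ := liminf_and_limsup_div_log_le_of_le_comp (u := logLogMaxMod f)
    (v := logLogMaxMod (iteratedDeriv k f)) (m := id) (c := c₂)
    (fun _ => posLog_nonneg) map_id (tendsto_const_nhds.congr' <|
      (tendsto_log_one_div_one_sub.eventually_gt_atTop 0).mono fun r hr => (div_self hr.ne').symm)
    (mem_of_superset hIoo fun r hr => (hreverse r hr).trans (le_add_of_nonneg_right posLog_nonneg))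
  rw [lowerOrder_eq_liminf, lowerOrder_eq_liminf, upperOrder_eq_limsup, upperOrder_eq_limsup]
  exact ⟨le_antisymm hle₁.1 hle₂.1, le_antisymm hle₁.2 hle₂.2⟩
end
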